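/- For each μ > 0, the function f(x) = log(√96·μ / (√96·μ² + |x|²)) on ℝ⁴ satisfies the equation Δ²f = e^{4f} on all of ℝ⁴. -/

import Mathlib

open Real MeasureTheory Metric Filter

/-!
For a radial function `u x = g ‖x‖²` on `ℝ⁴` one has `Δu = -(8 g'(t) + 4 t g''(t))` at `t = ‖x‖²`,
so everything reduces to calculus of rational functions of `t`. With `f = log (c / (a + t))`,
`Δf = (8a + 4t) / (a + t)²` and `Δ²f = 96 a² / (a + t)⁴`, which is `e^{4f} = c⁴ / (a + t)⁴`
exactly when `c⁴ = 96 a²`; this holds for `c = √96 μ`, `a = √96 μ²`.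
-/

abbrev E4 := EuclideanSpace ℝ (Fin 4)

noncomputable def lap (u : E4 → ℝ) (x : E4) : ℝ :=
  -∑ i : Fin 4, fderiv ℝ (fun y => fderiv ℝ u y (EuclideanSpace.single i 1)) x (EuclideanSpace.single i 1)

noncomputable def biLap (u : E4 → ℝ) : E4 → ℝ := lap (lap u)

lemma hasFDerivAt_comp_norm_sq {F : Type*} [NormedAddCommGroup F] [InnerProductSpace ℝ F]
    {g : ℝ → ℝ} {g' : ℝ} {y : F} (hg : HasDerivAt g g' (‖y‖ ^ 2)) :
    HasFDerivAt (fun z : F => g (‖z‖ ^ 2)) (g' • 2 • innerSL ℝ y) y :=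
  hg.comp_hasFDerivAt y (hasStrictFDerivAt_norm_sq y).hasFDerivAt

lemma fderiv_comp_norm_sq_single {ι : Type*} [Fintype ι] [DecidableEq ι] {g : ℝ → ℝ} {g' : ℝ}
    {y : EuclideanSpace ℝ ι} (hg : HasDerivAt g g' (‖y‖ ^ 2)) (i : ι) :
    fderiv ℝ (fun z : EuclideanSpace ℝ ι => g (‖z‖ ^ 2)) y (EuclideanSpace.single i 1)
      = 2 * y i * g' := by
  rw [(hasFDerivAt_comp_norm_sq hg).fderiv]
  simp only [smul_apply, coe_innerSL_apply, EuclideanSpace.inner_single_right, conj_trivial,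
    nsmul_eq_mul, Nat.cast_ofNat, smul_eq_mul]
  ring

lemma lap_comp_norm_sq {g g' g'' : ℝ → ℝ}
    (hg : ∀ t, 0 ≤ t → HasDerivAt g (g' t) t) (hg' : ∀ t, 0 ≤ t → HasDerivAt g' (g'' t) t)
    (x : E4) :
    lap (fun z => g (‖z‖ ^ 2)) x = -(8 * g' (‖x‖ ^ 2) + 4 * ‖x‖ ^ 2 * g'' (‖x‖ ^ 2)) := by
  have hsecond (i : Fin 4) :
      fderiv ℝ (fun y : E4 => fderiv ℝ (fun z : E4 => g (‖z‖ ^ 2)) y (EuclideanSpace.single i 1)) x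
        (EuclideanSpace.single i 1) = 2 * g' (‖x‖ ^ 2) + 4 * x i ^ 2 * g'' (‖x‖ ^ 2) := by
    have hfirst : (fun y : E4 => fderiv ℝ (fun z : E4 => g (‖z‖ ^ 2)) y (EuclideanSpace.single i 1))
        = fun y => 2 * (y i * g' (‖y‖ ^ 2)) := by
      funext y
      rw [fderiv_comp_norm_sq_single (hg _ (by positivity)), mul_assoc]
    have hprod : HasFDerivAt (fun y : E4 => 2 * (y i * g' (‖y‖ ^ 2)))
        ((2 : ℝ) • (x i • g'' (‖x‖ ^ 2) • 2 • innerSL ℝ x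
          + g' (‖x‖ ^ 2) • (EuclideanSpace.proj i : E4 →L[ℝ] ℝ))) x :=
      ((EuclideanSpace.proj i : E4 →L[ℝ] ℝ).hasFDerivAt.mul
        (hasFDerivAt_comp_norm_sq (hg' _ (by positivity)))).const_mul 2
    rw [hfirst, hprod.fderiv]
    simp only [smul_add, add_apply, smul_apply, coe_innerSL_apply,
      EuclideanSpace.inner_single_right, conj_trivial, nsmul_eq_mul, Nat.cast_ofNat, smul_eq_mul,
      PiLp.proj_apply, PiLp.single_eq_same]
    ring
  simp only [lap, hsecond, Finset.sum_add_distrib, ← Finset.sum_mul,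
    ← Finset.mul_sum, ← EuclideanSpace.real_norm_sq_eq, Finset.sum_const, Finset.card_univ,
    Fintype.card_fin, nsmul_eq_mul]
  ring

lemma hasDerivAt_affine_div_pow (a b d : ℝ) (n : ℕ) {t : ℝ} (ht : a + t ≠ 0) :
    HasDerivAt (fun s => (b + d * s) / (a + s) ^ n)
      ((d * a - n * b + (d - n * d) * t) / (a + t) ^ (n + 1)) t := by
  have hnum : HasDerivAt (fun s => b + d * s) d t := by
    simpa using ((hasDerivAt_id t).const_mul d).const_add b
  have hden : HasDerivAt (fun s => (a + s) ^ n) (n * (a + t) ^ (n - 1)) t := by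
    simpa using ((hasDerivAt_id t).const_add a).fun_pow n
  refine (hnum.fun_div hden (pow_ne_zero n ht)).congr_deriv ?_
  rcases n with _ | n
  · field_simp
    ring
  · field_simp
    push_cast
    ring

lemma hasDerivAt_log_div_add {a c t : ℝ} (hc : c ≠ 0) (ht : a + t ≠ 0) :
    HasDerivAt (fun s => log (c / (a + s))) (-1 / (a + t)) t := by
  have h := (hasDerivAt_affine_div_pow a c 0 1 ht).log (by simpa using div_ne_zero hc ht)
  simp only [zero_mul, add_zero, pow_one] at h
  convert h using 1
  field_simp
  ring

lemma lap_log_div_add_norm_sq {a c : ℝ} (ha : 0 < a) (hc : c ≠ 0) :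
    lap (fun z => log (c / (a + ‖z‖ ^ 2))) = fun x => (8 * a + 4 * ‖x‖ ^ 2) / (a + ‖x‖ ^ 2) ^ 2 := by
  have hne (t : ℝ) (ht : 0 ≤ t) : a + t ≠ 0 := by positivity
  funext x
  have hg' (t : ℝ) (ht : 0 ≤ t) : HasDerivAt (fun s => -1 / (a + s)) (1 / (a + t) ^ 2) t := by
    simpa using hasDerivAt_affine_div_pow a (-1) 0 1 (hne t ht)
  rw [lap_comp_norm_sq (fun t ht => hasDerivAt_log_div_add hc (hne t ht)) hg']
  have hx := hne _ (sq_nonneg ‖x‖)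
  field_simp
  ring

lemma biLap_log_div_add_norm_sq {a c : ℝ} (ha : 0 < a) (hc : c ≠ 0) (x : E4) :
    biLap (fun y => log (c / (a + ‖y‖ ^ 2))) x = 96 * a ^ 2 / (a + ‖x‖ ^ 2) ^ 4 := by
  have hne (t : ℝ) (ht : 0 ≤ t) : a + t ≠ 0 := by positivity
  rw [biLap, lap_log_div_add_norm_sq ha hc,
    lap_comp_norm_sq (fun t ht => hasDerivAt_affine_div_pow a (8 * a) 4 2 (hne t ht))
      (fun t ht => hasDerivAt_affine_div_pow a _ _ 3 (hne t ht))]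
  have hx := hne _ (sq_nonneg ‖x‖)
  field_simp
  ring

theorem stmt1 (μ : ℝ) (hμ : 0 < μ) :
    ∀ x : E4,
      biLap (fun y => Real.log (Real.sqrt 96 * μ / (Real.sqrt 96 * μ ^ 2 + ‖y‖ ^ 2))) x
        = Real.exp (4 * Real.log (Real.sqrt 96 * μ / (Real.sqrt 96 * μ ^ 2 + ‖x‖ ^ 2))) := by
  intro x
  have h96 : Real.sqrt 96 ^ 2 = 96 := Real.sq_sqrt (by norm_num)
  rw [biLap_log_div_add_norm_sq (by positivity) (by positivity), ← Real.log_rpow (by positivity),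
    Real.exp_log (by positivity)]
  norm_cast
  rw [div_pow]
  congr 1
  linear_combination (-(μ ^ 4) * Real.sqrt 96 ^ 2) * h96
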